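/- Let k ≥ 1 be a real number and q ∈ (1/2, 1). Suppose {a_t}_{t≥0} and {b_t}_{t≥0} are sequences of nonnegative real numbers satisfying, for all t ≥ 1, b_{t+1} ≤ q·b_t + ((1−q)/(180k²))·(a_{t−1}² + a_t² + 2a_{t−1}a_t + √(b_t)·(a_{t−1} + a_t)) and a_t ≤ 2k·√(b_t) + a_{t−1}/6. Suppose {ã_t}_{t≥0} and {b̃_t}_{t≥0} are sequences of nonnegative real numbers satisfying, for all t ≥ 1, b̃_{t+1} = q·b̃_t + ((1−q)/(180k²))·(ã_{t−1}² + ã_t² + 2ã_{t−1}ã_t + √(b̃_t)·(ã_{t−1} + ã_t)) and ã_t = 2k·√(b̃_t) + ã_{t−1}/6. If a_0 ≤ ã_0, b_0 ≤ b̃_0, and b_1 ≤ b̃_1, then a_t ≤ ã_t and b_t ≤ b̃_t for all t ≥ 0. -/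

import Mathlib

open Matrix MeasureTheory ProbabilityTheory BigOperators

noncomputable section

/-- Frobenius norm of a real matrix. -/
def frob {m n : ℕ} (M : Matrix (Fin m) (Fin n) ℝ) : ℝ :=
  Real.sqrt (∑ i, ∑ j, (M i j) ^ 2)

/-- Euclidean norm of a vector in `ℝⁿ`. -/
def vnorm {n : ℕ} (v : Fin n → ℝ) : ℝ :=
  Real.sqrt (∑ i, (v i) ^ 2)

/-- Spectral norm (operator 2-norm) of a real matrix. -/
def spec {m n : ℕ} (M : Matrix (Fin m) (Fin n) ℝ) : ℝ :=
  ‖LinearMap.toContinuousLinearMap (Matrix.toEuclideanLin M)‖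

theorem isHermitian_tmul {m n : ℕ} (M : Matrix (Fin m) (Fin n) ℝ) :
    (Mᵀ * M).IsHermitian := by
  simpa [Matrix.conjTranspose_eq_transpose_of_trivial] using
    Matrix.isHermitian_conjTranspose_mul_self M

theorem posSemidef_tmul {m n : ℕ} (M : Matrix (Fin m) (Fin n) ℝ) :
    (Mᵀ * M).PosSemidef := by
  simpa [Matrix.conjTranspose_eq_transpose_of_trivial] using
    Matrix.posSemidef_conjTranspose_mul_self M

/-- The `i`-th largest singular value (1-indexed) of a real matrix, i.e. the square root of the
`i`-th largest eigenvalue of `MᵀM`; junk value `0` when `i` is out of range. -/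
def svalue {m n : ℕ} (M : Matrix (Fin m) (Fin n) ℝ) (i : ℕ) : ℝ :=
  if h : 1 ≤ i ∧ i ≤ n then
    Real.sqrt ((isHermitian_tmul M).eigenvalues
      (Tuple.sort (isHermitian_tmul M).eigenvalues ⟨n - i, by omega⟩))
  else 0

/-- Membership in the Stiefel manifold `St(m,r)`. -/
def Stiefel {m r : ℕ} (X : Matrix (Fin m) (Fin r) ℝ) : Prop :=
  Xᵀ * X = 1

/-- The Loewner order on (symmetric) real matrices: `A ⪯ B`. -/
def loewnerLE {m : ℕ} (A B : Matrix (Fin m) (Fin m) ℝ) : Prop :=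
  (B - A).PosSemidef

/-- The inverse of the positive semidefinite square root of a matrix (junk value `0` when the
matrix is not positive semidefinite). -/
def sqrtInv {r : ℕ} (S : Matrix (Fin r) (Fin r) ℝ) : Matrix (Fin r) (Fin r) ℝ :=
  haveI := Classical.propDecidable S.PosSemidef
  if h : S.PosSemidef then (h.1.eigenvectorUnitary.1 *
    Matrix.diagonal (RCLike.ofReal ∘ Real.sqrt ∘ h.1.eigenvalues : Fin r → ℝ) *
    (star h.1.eigenvectorUnitary : Matrix (Fin r) (Fin r) ℝ))⁻¹ else 0

/-- The linear sensing map `𝓜` determined by feature matrices `M_i`: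
`𝓜(B)_i = Tr(M_iᵀ B)`. -/
def calM {m n : ℕ} (Ms : Fin n → Matrix (Fin m) (Fin m) ℝ)
    (B : Matrix (Fin m) (Fin m) ℝ) : Fin n → ℝ :=
  fun i => ((Ms i)ᵀ * B).trace

/-- The adjoint `𝓜*` of the sensing map: `𝓜*(y) = ∑ i, y_i M_i`. -/
def calMadj {m n : ℕ} (Ms : Fin n → Matrix (Fin m) (Fin m) ℝ)
    (y : Fin n → ℝ) : Matrix (Fin m) (Fin m) ℝ :=
  ∑ i, y i • Ms i

/-- `(𝓜*𝓜 − 𝓘)(B)`. -/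
def calE {m n : ℕ} (Ms : Fin n → Matrix (Fin m) (Fin m) ℝ)
    (B : Matrix (Fin m) (Fin m) ℝ) : Matrix (Fin m) (Fin m) ℝ :=
  calMadj Ms (calM Ms B) - B

/-- The `(s, δ)`-restricted isometry property for the sensing map determined by `Ms`. -/
def IsRIP {m n : ℕ} (Ms : Fin n → Matrix (Fin m) (Fin m) ℝ) (s : ℕ) (δ : ℝ) : Prop :=
  ∀ B : Matrix (Fin m) (Fin m) ℝ, B.IsSymm → B.rank ≤ s →
    (1 - δ) * frob B ^ 2 ≤ vnorm (calM Ms B) ^ 2 ∧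
      vnorm (calM Ms B) ^ 2 ≤ (1 + δ) * frob B ^ 2

/-- The Riemannian gradient on the Stiefel manifold obtained from the Euclidean gradient `g`
at the point `X`. -/
def Rgrad {m r : ℕ} (X g : Matrix (Fin m) (Fin r) ℝ) : Matrix (Fin m) (Fin r) ℝ :=
  (1 - X * Xᵀ) * g + (2⁻¹ : ℝ) • (X * (Xᵀ * g - gᵀ * X))

/-- One step of Riemannian gradient descent (with `μ = 2`) for the weight-normalized
matrix sensing problem. -/
def RGDstep {m r n : ℕ} (Ms : Fin n → Matrix (Fin m) (Fin m) ℝ)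
    (A : Matrix (Fin m) (Fin m) ℝ) (η : ℝ)
    (p : Matrix (Fin m) (Fin r) ℝ × Matrix (Fin r) (Fin r) ℝ) :
    Matrix (Fin m) (Fin r) ℝ × Matrix (Fin r) (Fin r) ℝ :=
  let X := p.1
  let Θ := p.2
  let Gt := calMadj Ms (calM Ms (X * Θ * Xᵀ - A)) * X * Θ
  let G := Rgrad X Gt
  let X' := (X - η • G) * sqrtInv (1 + η ^ 2 • (Gᵀ * G))
  let Θ' := X'ᵀ * A * X' - X'ᵀ * calE Ms (X' * Θ * X'ᵀ - A) * X'
  (X', Θ')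

/-- The standard Gaussian ensemble on `m × r` real matrices (i.i.d. `N(0,1)` entries). -/
def gaussianEnsemble (m r : ℕ) : Measure (Fin m → Fin r → ℝ) :=
  Measure.pi fun _ : Fin m => Measure.pi fun _ : Fin r => gaussianReal 0 1

end

/-! Both recursions are monotone in all their arguments on nonnegative inputs, so the
comparison propagates by induction on the pair `(a t, b (t + 1))`, started from `a 0` and `b 1`. -/

theorem le_and_le_of_step_comparison {a b ta tb : ℕ → ℝ}
    (step_a : ∀ t, b (t + 1) ≤ tb (t + 1) → a t ≤ ta t → a (t + 1) ≤ ta (t + 1))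
    (step_b : ∀ t, b (t + 1) ≤ tb (t + 1) → a t ≤ ta t → a (t + 1) ≤ ta (t + 1) →
      b (t + 2) ≤ tb (t + 2))
    (h0a : a 0 ≤ ta 0) (h0b : b 0 ≤ tb 0) (h1b : b 1 ≤ tb 1) :
    ∀ t, a t ≤ ta t ∧ b t ≤ tb t := by
  have invariant : ∀ t, a t ≤ ta t ∧ b (t + 1) ≤ tb (t + 1) := by
    intro t
    induction t with
    | zero => exact ⟨h0a, h1b⟩
    | succ t ih =>
      have ha' := step_a t ih.2 ih.1
      exact ⟨ha', step_b t ih.2 ih.1 ha'⟩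
  rintro (_ | t)
  · exact ⟨h0a, h0b⟩
  · exact ⟨(invariant (t + 1)).1, (invariant t).2⟩

theorem sqrt_affine_le_sqrt_affine {k b tb x tx : ℝ} (hk : 0 ≤ k) (hb : b ≤ tb)
    (hx : x ≤ tx) : 2 * k * √b + x / 6 ≤ 2 * k * √tb + tx / 6 := by
  gcongr

theorem quadratic_update_le {q c b tb x y tx ty : ℝ} (hq : 0 ≤ q) (hc : 0 ≤ c)
    (hx0 : 0 ≤ x) (hy0 : 0 ≤ y) (hb : b ≤ tb) (hx : x ≤ tx) (hy : y ≤ ty) :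
    q * b + c * (x ^ 2 + y ^ 2 + 2 * x * y + √b * (x + y)) ≤
      q * tb + c * (tx ^ 2 + ty ^ 2 + 2 * tx * ty + √tb * (tx + ty)) := by
  have htx0 : 0 ≤ tx := hx0.trans hx
  gcongr

theorem stmt18_general (k q : ℝ) (hk : 1 ≤ k) (hq : q ∈ Set.Ioo (1 / 2 : ℝ) 1)
    (a b ta tb : ℕ → ℝ)
    (ha : ∀ t, 0 ≤ a t)
    (hrb : ∀ t : ℕ, 1 ≤ t →
      b (t + 1) ≤ q * b t + ((1 - q) / (180 * k ^ 2)) *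
        (a (t - 1) ^ 2 + a t ^ 2 + 2 * a (t - 1) * a t +
          Real.sqrt (b t) * (a (t - 1) + a t)))
    (hra : ∀ t : ℕ, 1 ≤ t → a t ≤ 2 * k * Real.sqrt (b t) + a (t - 1) / 6)
    (hrtb : ∀ t : ℕ, 1 ≤ t →
      tb (t + 1) = q * tb t + ((1 - q) / (180 * k ^ 2)) *
        (ta (t - 1) ^ 2 + ta t ^ 2 + 2 * ta (t - 1) * ta t +
          Real.sqrt (tb t) * (ta (t - 1) + ta t)))
    (hrta : ∀ t : ℕ, 1 ≤ t → ta t = 2 * k * Real.sqrt (tb t) + ta (t - 1) / 6)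
    (h0a : a 0 ≤ ta 0) (h0b : b 0 ≤ tb 0) (h1b : b 1 ≤ tb 1) :
    ∀ t : ℕ, a t ≤ ta t ∧ b t ≤ tb t := by
  have hc : 0 ≤ (1 - q) / (180 * k ^ 2) := div_nonneg (by linarith [hq.2]) (by positivity)
  refine le_and_le_of_step_comparison (fun t hb ha' => ?_) (fun t hb ha' ha'' => ?_)
    h0a h0b h1b
  · have hra' := hra (t + 1) t.succ_pos
    have hrta' := hrta (t + 1) t.succ_pos
    simp only [Nat.add_sub_cancel] at hra' hrta'
    exact hra'.trans (hrta' ▸ sqrt_affine_le_sqrt_affine (by linarith) hb ha')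
  · have hrb' := hrb (t + 1) t.succ_pos
    have hrtb' := hrtb (t + 1) t.succ_pos
    simp only [Nat.add_sub_cancel] at hrb' hrtb'
    exact hrb'.trans
      (hrtb' ▸ quadratic_update_le (by linarith [hq.1]) hc (ha t) (ha (t + 1)) hb ha' ha'')

theorem stmt18 (k q : ℝ) (hk : 1 ≤ k) (hq : q ∈ Set.Ioo (1 / 2 : ℝ) 1)
    (a b ta tb : ℕ → ℝ)
    (ha : ∀ t, 0 ≤ a t) (hb : ∀ t, 0 ≤ b t)
    (hta : ∀ t, 0 ≤ ta t) (htb : ∀ t, 0 ≤ tb t)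
    (hrb : ∀ t : ℕ, 1 ≤ t →
      b (t + 1) ≤ q * b t + ((1 - q) / (180 * k ^ 2)) *
        (a (t - 1) ^ 2 + a t ^ 2 + 2 * a (t - 1) * a t +
          Real.sqrt (b t) * (a (t - 1) + a t)))
    (hra : ∀ t : ℕ, 1 ≤ t → a t ≤ 2 * k * Real.sqrt (b t) + a (t - 1) / 6)
    (hrtb : ∀ t : ℕ, 1 ≤ t →
      tb (t + 1) = q * tb t + ((1 - q) / (180 * k ^ 2)) *
        (ta (t - 1) ^ 2 + ta t ^ 2 + 2 * ta (t - 1) * ta t +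
          Real.sqrt (tb t) * (ta (t - 1) + ta t)))
    (hrta : ∀ t : ℕ, 1 ≤ t → ta t = 2 * k * Real.sqrt (tb t) + ta (t - 1) / 6)
    (h0a : a 0 ≤ ta 0) (h0b : b 0 ≤ tb 0) (h1b : b 1 ≤ tb 1) :
    ∀ t : ℕ, a t ≤ ta t ∧ b t ≤ tb t :=
  stmt18_general k q hk hq a b ta tb ha hrb hra hrtb hrta h0a h0b h1b
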